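/- arXiv:1801.07191 — 4 statements merged into one kernel-verified Lean document; each statement's English description precedes it below -/
import Mathlib

section
/- Let X be a pre-Riesz space with vector lattice cover (Y, i), and let S ⊆ X be non-empty. Then i(𝓘_S) ⊆ 𝓘_{i(S)} ∩ i(X), where 𝓘_S denotes the ideal generated by S in X and 𝓘_{i(S)} the ideal generated by i(S) in Y. -/
open Set

section Defs

variable {Z : Type*} [AddCommGroup Z] [PartialOrder Z] [Module ℝ Z]

/-- Set of common upper bounds of `x` and `-x`. -/
def pmUB (x : Z) : Set Z := upperBounds {x, -x}

/-- Disjointness in an ordered vector space: `{±(x+y)}ᵘ = {±(x−y)}ᵘ`. -/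
def Disj (x y : Z) : Prop :=
  upperBounds {x + y, -(x + y)} = upperBounds {x - y, -(x - y)}

/-- Disjoint complement of a set. -/
def dcomp (M : Set Z) : Set Z := {x : Z | ∀ y ∈ M, Disj x y}

/-- `D` is a linear subspace. -/
def IsSubsp (D : Set Z) : Prop :=
  (0 : Z) ∈ D ∧ (∀ x ∈ D, ∀ y ∈ D, x + y ∈ D) ∧ ∀ (r : ℝ), ∀ x ∈ D, r • x ∈ D

/-- A band is a linear subspace `B` with `Bᵈᵈ = B`. -/
def IsBand (B : Set Z) : Prop := IsSubsp B ∧ dcomp (dcomp B) = B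

/-- `M` is solid: `{±y}ᵘ ⊆ {±x}ᵘ` with `y ∈ M` implies `x ∈ M`. -/
def IsSolid (M : Set Z) : Prop := ∀ x : Z, ∀ y ∈ M, pmUB y ⊆ pmUB x → x ∈ M

/-- An ideal is a solid linear subspace. -/
def IsIdeal (I : Set Z) : Prop := IsSubsp I ∧ IsSolid I

/-- The ideal generated by `S`. -/
def idealGen (S : Set Z) : Set Z := ⋂₀ {I : Set Z | IsIdeal I ∧ S ⊆ I}

/-- The band generated by `S`. -/
def bandGen (S : Set Z) : Set Z := ⋂₀ {B : Set Z | IsBand B ∧ S ⊆ B}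

/-- A subset is directed if any two elements have a common upper bound in it. -/
def IsDirectedSet (D : Set Z) : Prop := ∀ x ∈ D, ∀ y ∈ D, ∃ z ∈ D, x ≤ z ∧ y ≤ z

/-- `D` is order dense in `E` (infima taken within `E`): every `y ∈ E` is the
infimum, computed in `E`, of `{w ∈ D | y ≤ w}`. -/
def OrderDenseIn (D E : Set Z) : Prop :=
  ∀ y ∈ E, y ∈ lowerBounds {w : Z | w ∈ D ∧ y ≤ w} ∧
    ∀ z ∈ E, z ∈ lowerBounds {w : Z | w ∈ D ∧ y ≤ w} → z ≤ y

/-- `D` is majorizing in `E`. -/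
def MajorizingIn (D E : Set Z) : Prop := ∀ y ∈ E, ∃ d ∈ D, y ≤ d

end Defs

/-!
An upper bound `u` of `±i y` in `Y` is the infimum of the elements `i w ≥ u`, and by
bipositivity each such `w` is an upper bound of `±y`. Hence `{±y}ᵘ ⊆ {±x}ᵘ` in `X` implies
`{±i y}ᵘ ⊆ {±i x}ᵘ` in `Y`, so the preimage under `i` of the ideal generated by `i(S)` is an
ideal of `X` containing `S`, and therefore contains `𝓘_S`.
-/

lemma mem_pmUB {Z : Type*} [AddCommGroup Z] [PartialOrder Z] {x u : Z} :
    u ∈ pmUB x ↔ x ≤ u ∧ -x ≤ u := by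
  simp [pmUB, upperBounds_insert, upperBounds_singleton]

section Ideals

variable {Z : Type*} [AddCommGroup Z] [PartialOrder Z] [Module ℝ Z]

lemma isIdeal_idealGen (S : Set Z) : IsIdeal (idealGen S) := by
  refine ⟨⟨fun I hI => hI.1.1.1, ?_, ?_⟩, ?_⟩
  · exact fun x hx y hy I hI => hI.1.1.2.1 x (hx I hI) y (hy I hI)
  · exact fun r x hx I hI => hI.1.1.2.2 r x (hx I hI)
  · exact fun x y hy h I hI => hI.1.2 x y (hy I hI) h

lemma subset_idealGen (S : Set Z) : S ⊆ idealGen S :=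
  fun _ hx _ hI => hI.2 hx

lemma idealGen_subset {S I : Set Z} (hI : IsIdeal I) (hS : S ⊆ I) : idealGen S ⊆ I :=
  fun _ hx => hx I ⟨hI, hS⟩

end Ideals

section Preimage

variable {X Y : Type*} [AddCommGroup X] [AddCommGroup Y]

lemma IsSubsp.preimage [Module ℝ X] [Module ℝ Y] (f : X →ₗ[ℝ] Y) {D : Set Y} (hD : IsSubsp D) :
    IsSubsp (f ⁻¹' D) := by
  obtain ⟨h0, hadd, hsmul⟩ := hD
  refine ⟨?_, fun a ha b hb => ?_, fun r a ha => ?_⟩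
  · simpa using h0
  · simpa using hadd _ ha _ hb
  · simpa using hsmul r _ ha

variable [PartialOrder X] [PartialOrder Y]

lemma IsSolid.preimage (f : X → Y)
    (hf : ∀ x y : X, pmUB y ⊆ pmUB x → pmUB (f y) ⊆ pmUB (f x))
    {M : Set Y} (hM : IsSolid M) : IsSolid (f ⁻¹' M) :=
  fun x y hy hxy => hM (f x) (f y) hy (hf x y hxy)

variable [Module ℝ X] [Module ℝ Y]

lemma IsIdeal.preimage (f : X →ₗ[ℝ] Y)
    (hf : ∀ x y : X, pmUB y ⊆ pmUB x → pmUB (f y) ⊆ pmUB (f x))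
    {I : Set Y} (hI : IsIdeal I) : IsIdeal (f ⁻¹' I) :=
  ⟨hI.1.preimage f, hI.2.preimage f hf⟩

lemma LinearMap.map_le_map_iff_of_bipositive
    [CovariantClass X X (· + ·) (· ≤ ·)] [CovariantClass Y Y (· + ·) (· ≤ ·)]
    (f : X →ₗ[ℝ] Y) (hf : ∀ x : X, 0 ≤ f x ↔ 0 ≤ x) {a b : X} : f a ≤ f b ↔ a ≤ b := by
  rw [← sub_nonneg, ← map_sub, hf, sub_nonneg]

lemma pmUB_map_subset_pmUB_map (f : X →ₗ[ℝ] Y) (hle : ∀ a b : X, f a ≤ f b ↔ a ≤ b)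
    (hdense : ∀ y : Y, IsGLB {z : Y | z ∈ range f ∧ y ≤ z} y)
    {x y : X} (hxy : pmUB y ⊆ pmUB x) : pmUB (f y) ⊆ pmUB (f x) := by
  intro u hu
  rw [mem_pmUB] at hu ⊢
  have hbound : ∀ w : X, u ≤ f w → x ≤ w ∧ -x ≤ w := by
    intro w huw
    refine mem_pmUB.1 (hxy (mem_pmUB.2 ⟨?_, ?_⟩))
    · exact (hle y w).1 (hu.1.trans huw)
    · exact (hle (-y) w).1 (by simpa using hu.2.trans huw)
  constructor
  · refine (hdense u).2 ?_
    rintro _ ⟨⟨w, rfl⟩, huw⟩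
    exact (hle x w).2 (hbound w huw).1
  · have : f (-x) ≤ u := (hdense u).2 <| by
      rintro _ ⟨⟨w, rfl⟩, huw⟩
      exact (hle (-x) w).2 (hbound w huw).2
    simpa using this

end Preimage

theorem stmt_7_general {X Y : Type*} [AddCommGroup X] [PartialOrder X] [CovariantClass X X (· + ·) (· ≤ ·)] [Module ℝ X] [AddCommGroup Y] [Lattice Y] [CovariantClass Y Y (· + ·) (· ≤ ·)] [Module ℝ Y]
    (i : X →ₗ[ℝ] Y) (hbi : ∀ x : X, 0 ≤ i x ↔ 0 ≤ x)
    (hdense : ∀ y : Y, IsGLB {z : Y | z ∈ Set.range i ∧ y ≤ z} y)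
    (S : Set X) :
    i '' idealGen S ⊆ idealGen (i '' S) ∩ Set.range i := by
  have hle : ∀ a b : X, i a ≤ i b ↔ a ≤ b :=
    fun _ _ => i.map_le_map_iff_of_bipositive hbi
  have hpre : IsIdeal (i ⁻¹' idealGen (i '' S)) :=
    (isIdeal_idealGen _).preimage i fun _ _ => pmUB_map_subset_pmUB_map i hle hdense
  have hS : S ⊆ i ⁻¹' idealGen (i '' S) := image_subset_iff.1 (subset_idealGen _)
  rintro _ ⟨x, hx, rfl⟩
  exact ⟨idealGen_subset hpre hS hx, x, rfl⟩

/-- For a pre-Riesz space X with vector lattice cover (Y, i) and non-empty S ⊆ X: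
i(𝓘_S) ⊆ 𝓘_{i(S)} ∩ i(X). -/
theorem stmt_7 {X Y : Type*} [AddCommGroup X] [PartialOrder X] [CovariantClass X X (· + ·) (· ≤ ·)] [Module ℝ X] [PosSMulMono ℝ X] [AddCommGroup Y] [Lattice Y] [CovariantClass Y Y (· + ·) (· ≤ ·)] [Module ℝ Y] [PosSMulMono ℝ Y]
    (i : X →ₗ[ℝ] Y) (hbi : ∀ x : X, 0 ≤ i x ↔ 0 ≤ x)
    (hdense : ∀ y : Y, IsGLB {z : Y | z ∈ Set.range i ∧ y ≤ z} y)
    (S : Set X) (hne : S.Nonempty) :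
    i '' idealGen S ⊆ idealGen (i '' S) ∩ Set.range i :=
  stmt_7_general i hbi hdense S
end

section
/- Let X be a fordable pre-Riesz space with vector lattice cover (Y, i), and let S ⊆ X be non-empty. Then the band 𝓑_{i(S)} = (i(S))ᵈᵈ generated by i(S) in Y is the smallest extension band of the band 𝓑_S = Sᵈᵈ generated by S in X, i.e., i⁻¹(𝓑_{i(S)}) = 𝓑_S and 𝓑_{i(S)} is contained in every band J ⊆ Y with i⁻¹(J) = 𝓑_S. -/
open Set

/-!
Bipositivity of `i` gives `i⁻¹({±i x}ᵘ) = {±x}ᵘ`, and order density recovers `|i x|` as the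
infimum of `i({±x}ᵘ)`; since `u ⊥ v` in `Y` means `|u + v| = |u - v|`, the map `i` preserves and
reflects disjointness: `i⁻¹(i(T)ᵈ) = Tᵈ`. In the lattice `Y`, `u ⊥ v` depends on `v` only through
`|v|`, so fordability of `|v|` for `v ∈ i(S)ᵈ` supplies `S'` with `{v}ᵈ = i(S')ᵈ`. Then `S' ⊆ Sᵈ`,
and every `x ∈ Sᵈᵈ ⊆ S'ᵈ` has `i x ⊥ v`, which gives `i⁻¹(i(S)ᵈᵈ) = Sᵈᵈ`. Minimality is formal:
a band `J` with `i⁻¹(J) = Sᵈᵈ` contains `i(S)`, hence `i(S)ᵈᵈ`.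
-/

section OrderedSpace

variable {Z : Type*} [AddCommGroup Z] [PartialOrder Z]

theorem Disj.symm {x y : Z} (h : Disj x y) : Disj y x := by
  unfold Disj at h ⊢
  rwa [add_comm y x, ← neg_sub x y, neg_neg, pair_comm (-(x - y))]

theorem dcomp_antitone : Antitone (dcomp : Set Z → Set Z) :=
  fun _ _ h _ hx y hy => hx y (h hy)

theorem subset_dcomp_comm {A B : Set Z} : A ⊆ dcomp B ↔ B ⊆ dcomp A :=
  ⟨fun h _ hb _ ha => (h ha _ hb).symm, fun h _ ha _ hb => (h hb _ ha).symm⟩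

theorem subset_dcomp_dcomp (A : Set Z) : A ⊆ dcomp (dcomp A) :=
  subset_dcomp_comm.1 subset_rfl

theorem IsBand.dcomp_dcomp_subset [Module ℝ Z] {J A : Set Z} (hJ : IsBand J) (h : A ⊆ J) :
    dcomp (dcomp A) ⊆ J :=
  hJ.2 ▸ dcomp_antitone (dcomp_antitone h)

end OrderedSpace

section LatticeGroup

variable {Y : Type*} [AddCommGroup Y] [Lattice Y]

theorem pmUB_eq_Ici_abs (a : Y) : pmUB a = Ici |a| := by
  rw [pmUB, upperBounds_insert, upperBounds_singleton, Ici_inter_Ici, abs]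

theorem disj_iff_abs_add_eq_abs_sub (u v : Y) : Disj u v ↔ |u + v| = |u - v| := by
  change pmUB (u + v) = pmUB (u - v) ↔ _
  rw [pmUB_eq_Ici_abs, pmUB_eq_Ici_abs, Ici_inj]

variable [AddLeftMono Y]

theorem abs_add_sup_abs_sub (a b : Y) : |a + b| ⊔ |a - b| = |a| + |b| := by
  calc |a + b| ⊔ |a - b|
      = ((a + b) ⊔ (a - b)) ⊔ (-(a + b) ⊔ -(a - b)) := sup_sup_sup_comm _ _ _ _
    _ = (a + (b ⊔ -b)) ⊔ (-a + (b ⊔ -b)) := by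
        rw [neg_sub, neg_add, sub_eq_add_neg a b, sub_eq_neg_add b a, ← add_sup, ← add_sup,
          sup_comm (-b) b]
    _ = |a| + |b| := (sup_add _ _ _).symm

theorem add_inf_sub_eq_sub_abs (c x : Y) : (c + x) ⊓ (c - x) = c - |x| := by
  rw [sub_eq_add_neg c x, ← add_inf, sub_eq_add_neg, abs, neg_sup, neg_neg, inf_comm]

theorem abs_add_inf_abs_sub (a b : Y) : |a + b| ⊓ |a - b| = |(|a| - |b|)| := by
  let _ : DistribLattice Y := AddCommGroup.toDistribLattice Y
  have e₁ : (a + b) ⊓ -(a - b) = b - |a| := by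
    rw [← add_inf_sub_eq_sub_abs]; congr 1 <;> abel
  have e₂ : -(a + b) ⊓ (a - b) = -b - |a| := by
    rw [← add_inf_sub_eq_sub_abs, inf_comm]; congr 1 <;> abel
  have e₃ : -(a + b) ⊓ -(a - b) = -a - |b| := by
    rw [← add_inf_sub_eq_sub_abs, inf_comm]; congr 1 <;> abel
  calc |a + b| ⊓ |a - b|
      = ((a + b) ⊓ (a - b) ⊔ (a + b) ⊓ -(a - b)) ⊔
          (-(a + b) ⊓ (a - b) ⊔ -(a + b) ⊓ -(a - b)) := by
        rw [abs, abs, inf_sup_right, inf_sup_left, inf_sup_left]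
    _ = ((a ⊔ -a) - |b|) ⊔ ((b ⊔ -b) - |a|) := by
        rw [add_inf_sub_eq_sub_abs, e₁, e₂, e₃, sup_sub, sup_sub]; ac_rfl
    _ = |(|a| - |b|)| := by
        change (|a| - |b|) ⊔ (|b| - |a|) = (|a| - |b|) ⊔ -(|a| - |b|)
        rw [neg_sub]

theorem disj_iff_add_abs_eq_abs_sub_abs (u v : Y) :
    Disj u v ↔ |u| + |v| = |(|u| - |v|)| := by
  rw [disj_iff_abs_add_eq_abs_sub, ← inf_eq_sup, abs_add_sup_abs_sub, abs_add_inf_abs_sub,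
    eq_comm]

theorem dcomp_singleton_abs (v : Y) : dcomp {v} = dcomp {|v|} := by
  ext u
  simp only [dcomp, mem_singleton_iff, forall_eq, disj_iff_add_abs_eq_abs_sub_abs, abs_abs]

end LatticeGroup

section Bipositive

variable {X Y : Type*} [AddCommGroup X] [PartialOrder X] [AddLeftMono X] [Module ℝ X]
  [AddCommGroup Y] [PartialOrder Y] [AddLeftMono Y] [Module ℝ Y] {i : X →ₗ[ℝ] Y}

theorem map_le_map_iff_of_bipositive (hbi : ∀ x : X, 0 ≤ i x ↔ 0 ≤ x) {a b : X} :
    i a ≤ i b ↔ a ≤ b := by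
  simpa only [map_sub, sub_nonneg] using hbi (b - a)

theorem preimage_pmUB_map (hbi : ∀ x : X, 0 ≤ i x ↔ 0 ≤ x) (a : X) :
    i ⁻¹' pmUB (i a) = pmUB a := by
  ext z
  simp only [pmUB, upperBounds_insert, upperBounds_singleton, ← map_neg, mem_preimage,
    mem_inter_iff, mem_Ici, map_le_map_iff_of_bipositive hbi]

end Bipositive

section VectorLatticeCover

variable {X Y : Type*} [AddCommGroup X] [PartialOrder X] [AddLeftMono X] [Module ℝ X]
  [AddCommGroup Y] [Lattice Y] [AddLeftMono Y] [Module ℝ Y] {i : X →ₗ[ℝ] Y}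

theorem image_pmUB (hbi : ∀ x : X, 0 ≤ i x ↔ 0 ≤ x) (a : X) :
    i '' pmUB a = {z | z ∈ range i ∧ |i a| ≤ z} := by
  rw [← preimage_pmUB_map hbi, image_preimage_eq_range_inter, pmUB_eq_Ici_abs]
  rfl

theorem abs_map_eq_abs_map_iff (hbi : ∀ x : X, 0 ≤ i x ↔ 0 ≤ x)
    (hdense : ∀ y : Y, IsGLB {z : Y | z ∈ range i ∧ y ≤ z} y) {a b : X} :
    |i a| = |i b| ↔ pmUB a = pmUB b := by
  constructor
  · intro h
    rw [← preimage_pmUB_map hbi, ← preimage_pmUB_map hbi, pmUB_eq_Ici_abs, pmUB_eq_Ici_abs, h]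
  · intro h
    have hGLB := hdense |i a|
    rw [← image_pmUB hbi, h, image_pmUB hbi] at hGLB
    exact hGLB.unique (hdense _)

theorem disj_map_iff (hbi : ∀ x : X, 0 ≤ i x ↔ 0 ≤ x)
    (hdense : ∀ y : Y, IsGLB {z : Y | z ∈ range i ∧ y ≤ z} y) {x y : X} :
    Disj (i x) (i y) ↔ Disj x y := by
  rw [disj_iff_abs_add_eq_abs_sub, ← map_add, ← map_sub, abs_map_eq_abs_map_iff hbi hdense]
  rfl

theorem preimage_dcomp_image (hbi : ∀ x : X, 0 ≤ i x ↔ 0 ≤ x)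
    (hdense : ∀ y : Y, IsGLB {z : Y | z ∈ range i ∧ y ≤ z} y) (T : Set X) :
    i ⁻¹' dcomp (i '' T) = dcomp T := by
  ext x
  simp only [dcomp, mem_preimage, mem_ofPred_eq, forall_mem_image, disj_map_iff hbi hdense]

theorem preimage_dcomp_dcomp_image (hbi : ∀ x : X, 0 ≤ i x ↔ 0 ≤ x)
    (hdense : ∀ y : Y, IsGLB {z : Y | z ∈ range i ∧ y ≤ z} y)
    (hford : ∀ y : Y, 0 ≤ y → ∃ S' : Set X, dcomp {y} = dcomp (i '' S')) (S : Set X) :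
    i ⁻¹' dcomp (dcomp (i '' S)) = dcomp (dcomp S) := by
  refine Subset.antisymm ?_ fun x hx v hv => ?_
  · have h : i '' dcomp S ⊆ dcomp (i '' S) :=
      image_subset_iff.2 (preimage_dcomp_image hbi hdense S).ge
    rw [← preimage_dcomp_image hbi hdense (dcomp S)]
    exact preimage_mono (dcomp_antitone h)
  · obtain ⟨S', hS'⟩ := hford |v| (abs_nonneg v)
    rw [← dcomp_singleton_abs] at hS'
    have hS'S : S' ⊆ dcomp S := by
      rw [subset_dcomp_comm, ← preimage_dcomp_image hbi hdense, ← hS']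
      rintro s hs _ rfl
      exact (hv (i s) (mem_image_of_mem i hs)).symm
    have hx' : i x ∈ dcomp (i '' S') :=
      (preimage_dcomp_image hbi hdense S').ge (dcomp_antitone hS'S hx)
    rw [← hS'] at hx'
    exact hx' v rfl

end VectorLatticeCover

theorem stmt_12_general {X Y : Type*} [AddCommGroup X] [PartialOrder X] [CovariantClass X X (· + ·) (· ≤ ·)] [Module ℝ X] [AddCommGroup Y] [Lattice Y] [CovariantClass Y Y (· + ·) (· ≤ ·)] [Module ℝ Y]
    (i : X →ₗ[ℝ] Y) (hbi : ∀ x : X, 0 ≤ i x ↔ 0 ≤ x)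
    (hdense : ∀ y : Y, IsGLB {z : Y | z ∈ Set.range i ∧ y ≤ z} y)
    (hford : ∀ y : Y, 0 ≤ y → ∃ S' : Set X, dcomp {y} = dcomp (i '' S'))
    (S : Set X) :
    i ⁻¹' dcomp (dcomp (i '' S)) = dcomp (dcomp S) ∧
      ∀ J : Set Y, IsBand J → i ⁻¹' J = dcomp (dcomp S) →
        dcomp (dcomp (i '' S)) ⊆ J := by
  refine ⟨preimage_dcomp_dcomp_image hbi hdense hford S, fun J hJ hJS => hJ.dcomp_dcomp_subset ?_⟩
  rw [image_subset_iff, hJS]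
  exact subset_dcomp_dcomp S

/-- For a fordable pre-Riesz space X and non-empty S ⊆ X, the band generated by
i(S) in Y is the smallest extension band of the band generated by S in X. -/
theorem stmt_12 {X Y : Type*} [AddCommGroup X] [PartialOrder X] [CovariantClass X X (· + ·) (· ≤ ·)] [Module ℝ X] [PosSMulMono ℝ X] [AddCommGroup Y] [Lattice Y] [CovariantClass Y Y (· + ·) (· ≤ ·)] [Module ℝ Y] [PosSMulMono ℝ Y]
    (i : X →ₗ[ℝ] Y) (hbi : ∀ x : X, 0 ≤ i x ↔ 0 ≤ x)
    (hdense : ∀ y : Y, IsGLB {z : Y | z ∈ Set.range i ∧ y ≤ z} y)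
    (hford : ∀ y : Y, 0 ≤ y → ∃ S' : Set X, dcomp {y} = dcomp (i '' S'))
    (S : Set X) (hne : S.Nonempty) :
    i ⁻¹' dcomp (dcomp (i '' S)) = dcomp (dcomp S) ∧
      ∀ J : Set Y, IsBand J → i ⁻¹' J = dcomp (dcomp S) →
        dcomp (dcomp (i '' S)) ⊆ J :=
  stmt_12_general i hbi hdense hford S
end

section
/- Let X be an Archimedean pre-Riesz space, Y a vector lattice, and i : X → Y a bipositive linear map. Then the following are equivalent: (1) i(X) is order dense in Y and X is pervasive; (2) i(X) is majorizing in Y and for every y ∈ Y₊ there is a set A ⊆ i(X)₊ with y = sup A. -/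
open Set

/-!
Work with the additive subgroup `D = i(X)` of `Y`. If every `y` is the infimum of the elements of
`D` above it, that set is never empty (otherwise `y` would be a top element of an ordered group),
so `D` is majorizing; conversely, choosing `z ∈ D` above `y` and `A ⊆ D` with `z - y = sup A`
exhibits `y` as the infimum of the elements `z - a ∈ D`.
For `0 ≤ y`, if an upper bound `u` of `D ∩ [0, y]` did not dominate `y`, pervasiveness would give
some `0 < z ∈ D` below `y - y ⊓ u`; then all multiples of `z` stay in `D ∩ [0, y]`, contradicting
the Archimedean property, which passes from `X` to `D` because `i` is bipositive.
-/

section OrderedGroup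

variable {Y : Type*} [AddCommGroup Y]

theorem IsTop.nonpos [PartialOrder Y] [AddLeftMono Y] {y : Y} (h : IsTop y) : y ≤ 0 :=
  (add_le_iff_nonpos_right y).mp (h (y + y))

theorem exists_ge_of_forall_isGLB [PartialOrder Y] [AddLeftMono Y] {D : AddSubgroup Y}
    (hdense : ∀ y : Y, IsGLB {z | z ∈ D ∧ y ≤ z} y) (y : Y) : ∃ z ∈ D, y ≤ z := by
  by_contra! h
  have hempty : {z | z ∈ D ∧ y ≤ z} = ∅ :=
    Set.eq_empty_of_forall_notMem fun z hz => h z hz.1 hz.2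
  have htop : IsTop y := isGLB_empty_iff.mp (hempty ▸ hdense y)
  exact h 0 D.zero_mem htop.nonpos

theorem isGLB_of_forall_isLUB [PartialOrder Y] [AddLeftMono Y] {D : AddSubgroup Y}
    (hmaj : ∀ y : Y, ∃ z ∈ D, y ≤ z)
    (hsup : ∀ y : Y, 0 ≤ y → ∃ A ⊆ (D : Set Y), IsLUB A y) (y : Y) :
    IsGLB {z | z ∈ D ∧ y ≤ z} y := by
  obtain ⟨z₀, hz₀D, hyz₀⟩ := hmaj y
  obtain ⟨A, hAD, hA⟩ := hsup (z₀ - y) (sub_nonneg.mpr hyz₀)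
  refine ⟨fun z hz => hz.2, fun w hw => ?_⟩
  have hbound : z₀ - w ∈ upperBounds A := fun a ha =>
    le_sub_comm.mp (hw ⟨D.sub_mem hz₀D (hAD ha), le_sub_comm.mp (hA.1 ha)⟩)
  exact (sub_le_sub_iff_left z₀).mp (hA.2 hbound)

theorem exists_pos_mem_of_isLUB [PartialOrder Y] {A : Set Y} {y : Y}
    (hA : ∀ a ∈ A, 0 ≤ a) (hy : 0 < y) (hlub : IsLUB A y) : ∃ a ∈ A, 0 < a := by
  by_contra! h
  have hzero : 0 ∈ upperBounds A := fun a ha => ((hA a ha).eq_of_not_lt (h a ha)).ge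
  exact (hlub.2 hzero).not_gt hy

variable [SemilatticeInf Y] [AddLeftMono Y] {D : AddSubgroup Y}

theorem nsmul_mem_of_le_sub_inf {y u z : Y} (hy : 0 ≤ y)
    (hu : u ∈ upperBounds {a | a ∈ D ∧ 0 ≤ a ∧ a ≤ y})
    (hzD : z ∈ D) (hz : 0 ≤ z) (hzle : z ≤ y - y ⊓ u) (n : ℕ) :
    n • z ∈ {a | a ∈ D ∧ 0 ≤ a ∧ a ≤ y} := by
  induction n with
  | zero => simpa using hy
  | succ n ih =>
    refine ⟨D.nsmul_mem hzD _, nsmul_nonneg hz _, ?_⟩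
    calc (n + 1) • z = n • z + z := succ_nsmul z n
      _ ≤ y ⊓ u + (y - y ⊓ u) := add_le_add (le_inf ih.2.2 (hu ih)) hzle
      _ = y := add_sub_cancel _ _

theorem isLUB_of_pervasive (harch : ∀ a ∈ D, ∀ b ∈ D, (∀ n : ℕ, n • a ≤ b) → a ≤ 0)
    (hmaj : ∀ y : Y, ∃ z ∈ D, y ≤ z) (hperv : ∀ y : Y, 0 < y → ∃ z ∈ D, 0 < z ∧ z ≤ y)
    {y : Y} (hy : 0 ≤ y) : IsLUB {a | a ∈ D ∧ 0 ≤ a ∧ a ≤ y} y := by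
  refine ⟨fun a ha => ha.2.2, fun u hu => ?_⟩
  by_contra hyu
  have hpos : 0 < y - y ⊓ u := sub_pos.mpr (inf_le_left.lt_of_ne fun h => hyu (h ▸ inf_le_right))
  obtain ⟨z, hzD, hz, hzle⟩ := hperv _ hpos
  obtain ⟨b, hbD, hyb⟩ := hmaj y
  have hmul n := nsmul_mem_of_le_sub_inf hy hu hzD hz.le hzle n
  exact (harch z hzD b hbD fun n => (hmul n).2.2.trans hyb).not_gt hz

end OrderedGroup

theorem AddMonoidHom.range_archimedean {X Y : Type*} [AddCommGroup X] [PartialOrder X]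
    [AddLeftMono X] [AddCommGroup Y] [PartialOrder Y] [AddLeftMono Y]
    (harch : ∀ x y : X, (∀ n : ℕ, n • x ≤ y) → x ≤ 0)
    (i : X →+ Y) (hbi : ∀ x : X, 0 ≤ i x ↔ 0 ≤ x) :
    ∀ a ∈ i.range, ∀ b ∈ i.range, (∀ n : ℕ, n • a ≤ b) → a ≤ 0 := by
  have hle : ∀ x x' : X, i x ≤ i x' ↔ x ≤ x' := fun x x' => by
    rw [← sub_nonneg, ← map_sub, hbi, sub_nonneg]
  rintro _ ⟨x, rfl⟩ _ ⟨x', rfl⟩ h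
  rw [← i.map_zero, hle]
  exact harch x x' fun n => (hle _ _).mp (by simpa using h n)

theorem stmt_15_general {X Y : Type*} [AddCommGroup X] [PartialOrder X] [CovariantClass X X (· + ·) (· ≤ ·)] [Module ℝ X] [AddCommGroup Y] [Lattice Y] [CovariantClass Y Y (· + ·) (· ≤ ·)] [Module ℝ Y]
    (harch : ∀ x y : X, (∀ n : ℕ, n • x ≤ y) → x ≤ 0)
    (i : X →ₗ[ℝ] Y) (hbi : ∀ x : X, 0 ≤ i x ↔ 0 ≤ x) :
    ((∀ y : Y, IsGLB {z : Y | z ∈ Set.range i ∧ y ≤ z} y) ∧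
        (∀ y : Y, 0 < y → ∃ x : X, 0 < i x ∧ i x ≤ y)) ↔
      ((∀ y : Y, ∃ x : X, y ≤ i x) ∧
        (∀ y : Y, 0 ≤ y →
          ∃ A : Set Y, A ⊆ {a : Y | a ∈ Set.range i ∧ 0 ≤ a} ∧ IsLUB A y)) := by
  set D := i.toAddMonoidHom.range
  have hmaj_iff : (∀ y : Y, ∃ z ∈ D, y ≤ z) ↔ ∀ y : Y, ∃ x : X, y ≤ i x := by
    simp [D]
  constructor
  · rintro ⟨hdense, hperv⟩
    have hmaj := exists_ge_of_forall_isGLB (D := D) hdense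
    have hpervD : ∀ y : Y, 0 < y → ∃ z ∈ D, 0 < z ∧ z ≤ y := by
      simpa [D] using hperv
    refine ⟨hmaj_iff.mp hmaj, fun y hy => ⟨_, fun a ha => ⟨ha.1, ha.2.1⟩,
      isLUB_of_pervasive (i.toAddMonoidHom.range_archimedean harch hbi) hmaj hpervD hy⟩⟩
  · rintro ⟨hmaj, hsup⟩
    refine ⟨isGLB_of_forall_isLUB (hmaj_iff.mpr hmaj) fun y hy => ?_, fun y hy => ?_⟩
    · obtain ⟨A, hA, hlub⟩ := hsup y hy
      exact ⟨A, fun a ha => (hA ha).1, hlub⟩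
    · obtain ⟨A, hA, hlub⟩ := hsup y hy.le
      obtain ⟨_, ha, hpos⟩ := exists_pos_mem_of_isLUB (fun a ha => (hA ha).2) hy hlub
      obtain ⟨⟨x, rfl⟩, -⟩ := hA ha
      exact ⟨x, hpos, hlub.1 ha⟩

/-- Characterization of pervasiveness together with order denseness:
(1) i(X) order dense in Y and X pervasive iff
(2) i(X) majorizing in Y and every y ∈ Y₊ is the supremum of a subset of i(X)₊. -/
theorem stmt_15 {X Y : Type*} [AddCommGroup X] [PartialOrder X] [CovariantClass X X (· + ·) (· ≤ ·)] [Module ℝ X] [PosSMulMono ℝ X] [AddCommGroup Y] [Lattice Y] [CovariantClass Y Y (· + ·) (· ≤ ·)] [Module ℝ Y] [PosSMulMono ℝ Y]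
    (harch : ∀ x y : X, (∀ n : ℕ, n • x ≤ y) → x ≤ 0)
    (hdir : ∀ x y : X, ∃ z : X, x ≤ z ∧ y ≤ z)
    (i : X →ₗ[ℝ] Y) (hbi : ∀ x : X, 0 ≤ i x ↔ 0 ≤ x) :
    ((∀ y : Y, IsGLB {z : Y | z ∈ Set.range i ∧ y ≤ z} y) ∧
        (∀ y : Y, 0 < y → ∃ x : X, 0 < i x ∧ i x ≤ y)) ↔
      ((∀ y : Y, ∃ x : X, y ≤ i x) ∧
        (∀ y : Y, 0 ≤ y →
          ∃ A : Set Y, A ⊆ {a : Y | a ∈ Set.range i ∧ 0 ≤ a} ∧ IsLUB A y)) :=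
  stmt_15_general harch i hbi
end

section
/- Let X be an Archimedean pervasive pre-Riesz space with vector lattice cover (Y, i), B ⊆ X a band, and B̂ ⊆ Y an extension band of B (so i⁻¹(B̂) = B). Then i(B) is majorizing in B̂ if and only if i(B) is order dense in B̂. Moreover, in that case B is directed and pervasive, and B̂ is a vector lattice cover of B. -/
open Set

/-!
In a lattice-ordered group, disjointness `|a + b| = |a - b|` is equivalent to `|a| ⊓ |b| = 0`, which
passes to every `c` with `|c| ≤ |a|`; hence bands of `Y` are solid.

Suppose `i(B)` majorizes `B̂`, and let `z ∈ B̂` be a lower bound of the majorants of `y ∈ B̂` in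
`i(B)` with `z ≰ y`. Pervasiveness gives `0 < i x ≤ (z - y)⁺`, and solidity puts `x` in `B`. Then
`i x` can be subtracted arbitrarily often from a majorant of `y` without dropping below `y`, so
`n • x` stays below a fixed element of `X`, contradicting the Archimedean property. Conversely, an
element `y` without majorant in `i(B)` would lie above all of `B̂`, in particular above `y + y`.
Directedness of `B` comes from majorizing `i x₁ ⊔ i x₂ ∈ B̂`.
-/

section LatticeOrderedGroup

variable {α : Type*} [Lattice α] [AddCommGroup α]

theorem disj_iff_abs_add_eq_abs_sub_s17 {a b : α} : Disj a b ↔ |a + b| = |a - b| := by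
  have hub : ∀ c : α, upperBounds {c, -c} = Ici |c| := fun c => by
    rw [upperBounds_insert, upperBounds_singleton, Ici_inter_Ici]; rfl
  rw [Disj, hub, hub, Ici_inj]

theorem disj_comm {a b : α} : Disj a b ↔ Disj b a := by
  rw [disj_iff_abs_add_eq_abs_sub_s17, disj_iff_abs_add_eq_abs_sub_s17, add_comm, abs_sub_comm]

variable [AddLeftMono α]

theorem abs_add_abs_le_abs_add_sup_abs_sub (a b : α) : |a| + |b| ≤ |a + b| ⊔ |a - b| := by
  change (a ⊔ -a) + (b ⊔ -b) ≤ _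
  rw [sup_add, add_sup, add_sup]
  refine sup_le (sup_le ?_ ?_) (sup_le ?_ ?_)
  · exact (le_abs_self _).trans le_sup_left
  · rw [← sub_eq_add_neg]; exact (le_abs_self _).trans le_sup_right
  · rw [neg_add_eq_sub, ← neg_sub]; exact (neg_le_abs _).trans le_sup_right
  · rw [← neg_add]; exact (neg_le_abs _).trans le_sup_left

theorem abs_add_add_abs_sub_le (a b : α) : |a + b| + |a - b| ≤ 2 • (|a| ⊔ |b|) := by
  have twice : ∀ x, x ≤ |a| ⊔ |b| → x + x ≤ 2 • (|a| ⊔ |b|) := fun x hx => by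
    rw [two_nsmul]; exact add_le_add hx hx
  change ((a + b) ⊔ -(a + b)) + ((a - b) ⊔ -(a - b)) ≤ _
  rw [sup_add, add_sup, add_sup]
  refine sup_le (sup_le ?_ ?_) (sup_le ?_ ?_)
  · convert twice a ((le_abs_self a).trans le_sup_left) using 1; abel
  · convert twice b ((le_abs_self b).trans le_sup_right) using 1; abel
  · convert twice (-b) ((neg_le_abs b).trans le_sup_right) using 1; abel
  · convert twice (-a) ((neg_le_abs a).trans le_sup_left) using 1; abel

theorem abs_add_eq_abs_sub_iff (a b : α) : |a + b| = |a - b| ↔ |a| ⊓ |b| = 0 := by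
  have hinf : 0 ≤ |a| ⊓ |b| := le_inf (abs_nonneg a) (abs_nonneg b)
  constructor
  · intro h
    have hle : |a| + |b| ≤ |a + b| := by
      simpa only [h, sup_idem] using abs_add_abs_le_abs_add_sup_abs_sub a b
    have htwice : 2 • (|a| ⊓ |b|) + 2 • (|a| ⊔ |b|) ≤ 0 + 2 • (|a| ⊔ |b|) := calc
      2 • (|a| ⊓ |b|) + 2 • (|a| ⊔ |b|) = (|a| + |b|) + (|a| + |b|) := by
        rw [← nsmul_add, inf_add_sup, two_nsmul]
      _ ≤ |a + b| + |a - b| := add_le_add hle (h ▸ hle)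
      _ ≤ 0 + 2 • (|a| ⊔ |b|) := by rw [zero_add]; exact abs_add_add_abs_sub_le a b
    refine le_antisymm ?_ hinf
    calc |a| ⊓ |b| ≤ 2 • (|a| ⊓ |b|) := by rw [two_nsmul]; exact le_add_of_nonneg_left hinf
      _ ≤ 0 := le_of_add_le_add_right htwice
  · intro h
    -- Disjointness closes the gap between the triangle and the reverse triangle inequality.
    have hsum : |a| + |b| = |(|a| - |b|)| := by
      rw [abs_sub_comm, ← sup_sub_inf_eq_abs_sub, h, sub_zero, ← inf_add_sup, h, zero_add]
    have key : ∀ c : α, |c| = |b| → |a + c| ≤ |a - c| := fun c hc => calc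
      |a + c| ≤ |a| + |c| := abs_add_le a c
      _ = |(|a| - |c|)| := hc ▸ hsum
      _ ≤ |a - c| := abs_abs_sub_abs_le a c
    refine le_antisymm (key b rfl) ?_
    simpa only [sub_neg_eq_add, ← sub_eq_add_neg] using key (-b) (abs_neg b)

theorem abs_add_eq_abs_sub_of_abs_le {a b c : α} (hca : |c| ≤ |a|) (h : |a + b| = |a - b|) :
    |c + b| = |c - b| := by
  rw [abs_add_eq_abs_sub_iff] at h ⊢
  exact le_antisymm (h ▸ inf_le_inf_right _ hca) (le_inf (abs_nonneg c) (abs_nonneg b))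

end LatticeOrderedGroup

section Subspace

variable {Z : Type*} [AddCommGroup Z] [Module ℝ Z] {E : Set Z}

theorem IsSubsp.neg_mem (hE : IsSubsp E) {v : Z} (hv : v ∈ E) : -v ∈ E :=
  neg_one_smul ℝ v ▸ hE.2.2 (-1) v hv

theorem IsSubsp.sub_mem (hE : IsSubsp E) {v w : Z} (hv : v ∈ E) (hw : w ∈ E) : v - w ∈ E :=
  sub_eq_add_neg v w ▸ hE.2.1 v hv (-w) (hE.neg_mem hw)

/-- If `y` has no majorant in `D`, the infimum condition is vacuous, so even `y + y ≤ y`. -/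
theorem IsSubsp.majorizingIn_of_orderDenseIn [PartialOrder Z] [AddLeftMono Z] {D : Set Z}
    (hE : IsSubsp E) (hD : (0 : Z) ∈ D) (h : OrderDenseIn D E) : MajorizingIn D E := by
  intro y hy
  by_cases hmaj : ∃ d ∈ D, y ≤ d
  · exact hmaj
  push Not at hmaj
  have hyy : y + y ≤ y :=
    (h y hy).2 (y + y) (hE.2.1 y hy y hy) fun w hw => (hmaj w hw.1 hw.2).elim
  exact ⟨0, hD, add_le_iff_nonpos_left.1 hyy⟩

end Subspace

section Band

variable {Y : Type*} [AddCommGroup Y] [Lattice Y] [AddLeftMono Y] [Module ℝ Y] {E : Set Y}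

theorem IsBand.mem_of_abs_le (hE : IsBand E) {v w : Y} (hw : w ∈ E) (h : |v| ≤ |w|) :
    v ∈ E := by
  rw [← hE.2]
  intro y hy
  have hwy := disj_comm.1 (hy w hw)
  rw [disj_iff_abs_add_eq_abs_sub_s17] at hwy ⊢
  exact abs_add_eq_abs_sub_of_abs_le h hwy

theorem IsBand.mem_of_nonneg_of_le (hE : IsBand E) {v w : Y} (hv : 0 ≤ v) (hvw : v ≤ w)
    (hw : w ∈ E) : v ∈ E :=
  hE.mem_of_abs_le hw (by rwa [abs_of_nonneg hv, abs_of_nonneg (hv.trans hvw)])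

theorem IsBand.posPart_mem (hE : IsBand E) {w : Y} (hw : w ∈ E) : w⁺ ∈ E :=
  hE.mem_of_abs_le hw <| by
    rw [abs_of_nonneg (posPart_nonneg w)]; exact sup_le (le_abs_self w) (abs_nonneg w)

theorem IsBand.sup_mem (hE : IsBand E) {v w : Y} (hv : v ∈ E) (hw : w ∈ E) : v ⊔ w ∈ E :=
  sup_eq_add_posPart_sub v w ▸ hE.1.2.1 w hw _ (hE.posPart_mem (hE.1.sub_mem hv hw))

end Band

section Cover

variable {X Y F : Type*} [AddCommGroup X] [PartialOrder X] [AddLeftMono X]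
  [AddCommGroup Y] [Lattice Y] [AddLeftMono Y] [FunLike F X Y] [AddMonoidHomClass F X Y] {i : F}

theorem map_le_map_iff_of_map_nonneg_iff (hbi : ∀ x, 0 ≤ i x ↔ 0 ≤ x) {u v : X} :
    i u ≤ i v ↔ u ≤ v := by
  rw [← sub_nonneg, ← map_sub, hbi, sub_nonneg]

/-- Each step subtracts `u` from `w`, using `y + u ≤ z ⊔ y ≤ w`. -/
theorem add_nsmul_le_of_mem_lowerBounds {S : Set Y} {y z u : Y} (hS : ∀ w ∈ S, w - u ∈ S)
    (hz : z ∈ lowerBounds {w | w ∈ S ∧ y ≤ w}) (hu : u ≤ (z - y)⁺) (n : ℕ) :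
    ∀ w ∈ S, y ≤ w → y + n • u ≤ w := by
  induction n with
  | zero => simp
  | succ n ih =>
    intro w hw hyw
    have hstep : y + u ≤ w := calc
      y + u ≤ y + (z - y)⁺ := add_le_add_right hu y
      _ = z ⊔ y := (sup_eq_add_posPart_sub z y).symm
      _ ≤ w := sup_le (hz ⟨hw, hyw⟩) hyw
    have hsub := ih (w - u) (hS w hw) (le_sub_iff_add_le.2 hstep)
    rw [succ_nsmul, ← add_assoc]
    exact le_sub_iff_add_le.1 hsub

variable [Module ℝ Y] {E : Set Y}

theorem orderDenseIn_of_majorizingIn (hbi : ∀ x, 0 ≤ i x ↔ 0 ≤ x)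
    (harch : ∀ x y : X, (∀ n : ℕ, n • x ≤ y) → x ≤ 0)
    (hperv : ∀ y : Y, 0 < y → ∃ x : X, 0 < i x ∧ i x ≤ y) (hE : IsBand E)
    (hmaj : MajorizingIn (i '' (i ⁻¹' E)) E) : OrderDenseIn (i '' (i ⁻¹' E)) E := by
  intro y hy
  refine ⟨fun w hw => hw.2, fun z hz hzlb => ?_⟩
  by_contra hzy
  have hd : 0 < (z - y)⁺ :=
    (posPart_nonneg _).lt_of_ne' fun h => hzy (sub_nonpos.1 (posPart_eq_zero.1 h))
  obtain ⟨x, hx0, hxd⟩ := hperv _ hd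
  have hxE : i x ∈ E := hE.mem_of_nonneg_of_le hx0.le hxd (hE.posPart_mem (hE.1.sub_mem hz hy))
  have hsub : ∀ w ∈ i '' (i ⁻¹' E), w - i x ∈ i '' (i ⁻¹' E) := by
    rintro _ ⟨b, hb, rfl⟩
    exact ⟨b - x, by simpa using hE.1.sub_mem hb hxE, map_sub i b x⟩
  obtain ⟨_, ⟨b₀, hb₀, rfl⟩, hyb₀⟩ := hmaj y hy
  obtain ⟨_, ⟨b₁, -, rfl⟩, hyb₁⟩ := hmaj (-y) (hE.1.neg_mem hy)
  have hbounded : ∀ n : ℕ, n • x ≤ b₀ + b₁ := fun n => by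
    have hn := add_nsmul_le_of_mem_lowerBounds hsub hzlb hxd n _ ⟨b₀, hb₀, rfl⟩ hyb₀
    rw [← map_le_map_iff_of_map_nonneg_iff hbi, map_nsmul, map_add]
    calc n • i x = (y + n • i x) + -y := by abel
      _ ≤ i b₀ + i b₁ := add_le_add hn hyb₁
  have hx : i x ≤ i 0 := (map_le_map_iff_of_map_nonneg_iff hbi).2 (harch x _ hbounded)
  exact hx0.not_ge (by simpa using hx)

theorem isDirectedSet_preimage (hbi : ∀ x, 0 ≤ i x ↔ 0 ≤ x) (hE : IsBand E)
    (hmaj : MajorizingIn (i '' (i ⁻¹' E)) E) : IsDirectedSet (i ⁻¹' E) := by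
  intro x₁ hx₁ x₂ hx₂
  obtain ⟨_, ⟨b, hb, rfl⟩, hle⟩ := hmaj _ (hE.sup_mem hx₁ hx₂)
  exact ⟨b, hb, (map_le_map_iff_of_map_nonneg_iff hbi).1 (le_sup_left.trans hle),
    (map_le_map_iff_of_map_nonneg_iff hbi).1 (le_sup_right.trans hle)⟩

end Cover

theorem stmt_17_general {X Y : Type*} [AddCommGroup X] [PartialOrder X] [CovariantClass X X (· + ·) (· ≤ ·)] [Module ℝ X] [AddCommGroup Y] [Lattice Y] [CovariantClass Y Y (· + ·) (· ≤ ·)] [Module ℝ Y]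
    (i : X →ₗ[ℝ] Y) (hbi : ∀ x : X, 0 ≤ i x ↔ 0 ≤ x)
    (harch : ∀ x y : X, (∀ n : ℕ, n • x ≤ y) → x ≤ 0)
    (hperv : ∀ y : Y, 0 < y → ∃ x : X, 0 < i x ∧ i x ≤ y)
    (B : Set X)
    (Bhat : Set Y) (hBhat : IsBand Bhat) (hext : i ⁻¹' Bhat = B) :
    (MajorizingIn (i '' B) Bhat ↔ OrderDenseIn (i '' B) Bhat) ∧
      (MajorizingIn (i '' B) Bhat →
        IsDirectedSet B ∧ ∀ y ∈ Bhat, 0 < y → ∃ x ∈ B, 0 < i x ∧ i x ≤ y) := by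
  subst hext
  have hzero : (0 : Y) ∈ i '' (i ⁻¹' Bhat) := ⟨0, by simpa using hBhat.1.1, map_zero i⟩
  refine ⟨⟨orderDenseIn_of_majorizingIn hbi harch hperv hBhat,
    hBhat.1.majorizingIn_of_orderDenseIn hzero⟩, fun hmaj => ⟨?_, fun y hy hy0 => ?_⟩⟩
  · exact isDirectedSet_preimage hbi hBhat hmaj
  · obtain ⟨x, hx0, hxy⟩ := hperv y hy0
    exact ⟨x, hBhat.mem_of_nonneg_of_le hx0.le hxy hy, hx0, hxy⟩

/-- For a band B in an Archimedean pervasive pre-Riesz space and an extension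
band B̂ in Y: i(B) is majorizing in B̂ iff i(B) is order dense in B̂; in that
case B is directed (so B̂ is a vector lattice cover of B) and B is pervasive. -/
theorem stmt_17 {X Y : Type*} [AddCommGroup X] [PartialOrder X] [CovariantClass X X (· + ·) (· ≤ ·)] [Module ℝ X] [PosSMulMono ℝ X] [AddCommGroup Y] [Lattice Y] [CovariantClass Y Y (· + ·) (· ≤ ·)] [Module ℝ Y] [PosSMulMono ℝ Y]
    (i : X →ₗ[ℝ] Y) (hbi : ∀ x : X, 0 ≤ i x ↔ 0 ≤ x)
    (hdense : ∀ y : Y, IsGLB {z : Y | z ∈ Set.range i ∧ y ≤ z} y)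
    (harch : ∀ x y : X, (∀ n : ℕ, n • x ≤ y) → x ≤ 0)
    (hperv : ∀ y : Y, 0 < y → ∃ x : X, 0 < i x ∧ i x ≤ y)
    (B : Set X) (hB : IsBand B)
    (Bhat : Set Y) (hBhat : IsBand Bhat) (hext : i ⁻¹' Bhat = B) :
    (MajorizingIn (i '' B) Bhat ↔ OrderDenseIn (i '' B) Bhat) ∧
      (MajorizingIn (i '' B) Bhat →
        IsDirectedSet B ∧ ∀ y ∈ Bhat, 0 < y → ∃ x ∈ B, 0 < i x ∧ i x ≤ y) :=
  stmt_17_general i hbi harch hperv B Bhat hBhat hext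
end
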